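/- For s ≥ 5, if G is a bipartite graph with no independent set of size s (i.e., G is sP_1-free), then ivc(G) ≤ vc(G) + s − 3. -/

import Mathlib

/- A minimum vertex cover with at most one vertex is itself independent. Otherwise vc(G) ≥ 2, and one
side X of the bipartition is an independent vertex cover; X is finite, indeed has fewer than s vertices,
as it is independent, so ivc(G) ≤ s - 1 ≤ vc(G) + s - 3. -/

open SimpleGraph

/-- `S` is an independent set of `G`. -/
def IsIS {V : Type*} (G : SimpleGraph V) (S : Set V) : Prop :=
  S.Pairwise fun u v => ¬ G.Adj u v

/-- `G` contains no induced subgraph isomorphic to `H`. -/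
def HFree {W V : Type*} (H : SimpleGraph W) (G : SimpleGraph V) : Prop :=
  IsEmpty (H ↪g G)

/-- `G` is bipartite: the vertex set splits into two independent sets. -/
def IsBip {V : Type*} (G : SimpleGraph V) : Prop :=
  ∃ X : Set V, IsIS G X ∧ IsIS G Xᶜ

/-- `S` is a vertex cover of `G`. -/
def IsVC {V : Type*} (G : SimpleGraph V) (S : Finset V) : Prop :=
  ∀ ⦃u v⦄, G.Adj u v → u ∈ S ∨ v ∈ S

/-- minimum size of a vertex cover. -/
noncomputable def vc {V : Type*} (G : SimpleGraph V) : ℕ :=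
  sInf {n | ∃ S : Finset V, IsVC G S ∧ S.card = n}

/-- minimum size of an independent vertex cover. -/
noncomputable def ivc {V : Type*} (G : SimpleGraph V) : ℕ :=
  sInf {n | ∃ S : Finset V, IsVC G S ∧ IsIS G ↑S ∧ S.card = n}

section

variable {V : Type*} {G : SimpleGraph V}

theorem isIS_of_card_le_one {S : Finset V} (hS : S.card ≤ 1) : IsIS G ↑S :=
  Set.Subsingleton.pairwise (fun a ha b hb => Finset.card_le_one.mp hS a ha b hb) _

theorem IsIS.finite_of_card_lt {X : Set V} {s : ℕ} (hX : IsIS G X)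
    (hfree : ∀ S : Finset V, IsIS G ↑S → S.card < s) : X.Finite := by
  by_contra hinf
  obtain ⟨S, hSX, hcard⟩ := Set.Infinite.exists_subset_card_eq hinf s
  exact (hfree S (hX.mono hSX)).ne hcard

theorem isVC_of_isIS_compl {S : Finset V} (hS : IsIS G (↑S)ᶜ) : IsVC G S := by
  intro u v huv
  by_contra! h
  exact hS h.1 h.2 huv.ne huv

theorem exists_isVC_card_eq_vc {S : Finset V} (hS : IsVC G S) :
    ∃ C : Finset V, IsVC G C ∧ C.card = vc G :=
  Nat.sInf_mem (s := {n | ∃ S : Finset V, IsVC G S ∧ S.card = n}) ⟨S.card, S, hS, rfl⟩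

theorem ivc_le_card {S : Finset V} (hVC : IsVC G S) (hIS : IsIS G ↑S) : ivc G ≤ S.card :=
  Nat.sInf_le ⟨S, hVC, hIS, rfl⟩

end

theorem stmt_7_general {V : Type*} (G : SimpleGraph V) (s : ℕ)
    (hbip : IsBip G) (hfree : ∀ S : Finset V, IsIS G ↑S → S.card < s) :
    ivc G ≤ vc G + (s - 3) := by
  obtain ⟨X, hX, hXc⟩ := hbip
  set S := (hX.finite_of_card_lt hfree).toFinset
  have hSIS : IsIS G ↑S := by rwa [Set.Finite.coe_toFinset]
  have hSVC : IsVC G S := isVC_of_isIS_compl (by rwa [Set.Finite.coe_toFinset])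
  obtain ⟨C, hCVC, hC⟩ := exists_isVC_card_eq_vc hSVC
  by_cases hCsmall : C.card ≤ 1
  · have hivc := ivc_le_card hCVC (isIS_of_card_le_one hCsmall)
    omega
  · have hivc := ivc_le_card hSVC hSIS
    have hSlt := hfree S hSIS
    omega

theorem stmt_7 {V : Type*} [Fintype V] (G : SimpleGraph V) (s : ℕ) (hs : 5 ≤ s)
    (hbip : IsBip G) (hfree : ∀ S : Finset V, IsIS G ↑S → S.card < s) :
    ivc G ≤ vc G + (s - 3) :=
  stmt_7_general G s hbip hfree
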